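/- Let f : ℝ² → ℝ be differentiable and nowhere zero, V : ℝ² → ℝ differentiable, l(q,p) = (∂f/∂p₁)(p)·q₂ − (∂f/∂p₂)(p)·q₁, and fix t ∈ ℝ. On ℝ⁴ with coordinates (q₁,q₂,p₁,p₂), define the reduced symplectic matrix Ω_N(q,p) = (1/f(p)) · [[0,0,−1,0],[0,0,0,−1],[1,0,0,l/f],[0,1,−l/f,0]], the time-dependent vector field X_t(q,p) = (−(2p₁f + e^{4t}·l·∂V/∂q₂), −(2p₂f − e^{4t}·l·∂V/∂q₁), e^{4t}·f·∂V/∂q₁, e^{4t}·f·∂V/∂q₂), and the reduced Hamiltonian H_t(q,p) = p₁² + p₂² + e^{4t}·V(q₁,q₂). Then for every x ∈ ℝ⁴ and every w ∈ ℝ⁴: X_t(x)ᵀ · Ω_N(x) · w = DH_t(x)(w). That is, the interior product X_t ⌟ ω|_N equals the exact 1-form dH_t, so each X_t is the Hamiltonian vector field of H_t with respect to the reduced symplectic form; in particular the Lie derivative of ω|_N along X_t vanishes. -/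

import Mathlib

/-!
Both sides are linear in `w`, so it suffices to compare them coordinatewise. By the chain rule
`dH_t = 2p₁ dp₁ + 2p₂ dp₂ + e^{4t}(∂₁V dq₁ + ∂₂V dq₂)`. In `X_t ⌟ ω|_N` the factor `f` carried by
every component of `X_t` cancels the prefactor `1/f` of `Ω_N`, and the two contributions
containing `l` (from the `q`-components of `X_t` and from the `l/f` entries of `Ω_N`) cancel
each other.
-/

open Matrix

/-- The closure-condition function `l(q,p) = (∂f/∂p₁)(p)·q₂ − (∂f/∂p₂)(p)·q₁` on the reduced
phase space `ℝ⁴` with coordinates `(q₁,q₂,p₁,p₂)`. -/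
noncomputable def lfunN (f : (Fin 2 → ℝ) → ℝ) (x : Fin 4 → ℝ) : ℝ :=
  fderiv ℝ f ![x 2, x 3] (Pi.single 0 1) * x 1 -
    fderiv ℝ f ![x 2, x 3] (Pi.single 1 1) * x 0

/-- Matrix of the reduced symplectic form
`ω|_N = (1/f)(dp₁∧dq₁ + dp₂∧dq₂ + (l/f)·dp₁∧dp₂)` on the reduced phase space `ℝ⁴`. -/
noncomputable def OmegaN (f : (Fin 2 → ℝ) → ℝ) (x : Fin 4 → ℝ) : Matrix (Fin 4) (Fin 4) ℝ :=
  (f ![x 2, x 3])⁻¹ •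
    !![0, 0, -1, 0;
       0, 0, 0, -1;
       1, 0, 0, lfunN f x / f ![x 2, x 3];
       0, 1, -(lfunN f x / f ![x 2, x 3]), 0]

/-- The time-dependent reduced vector field `X_t` of the GUP Bianchi model. -/
noncomputable def Xt (f : (Fin 2 → ℝ) → ℝ) (V : (Fin 2 → ℝ) → ℝ) (t : ℝ) (x : Fin 4 → ℝ) :
    Fin 4 → ℝ :=
  let fp := f ![x 2, x 3]
  let l := lfunN f x
  let dV1 := fderiv ℝ V ![x 0, x 1] (Pi.single 0 1)
  let dV2 := fderiv ℝ V ![x 0, x 1] (Pi.single 1 1)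
  ![-(2 * x 2 * fp + Real.exp (4 * t) * l * dV2),
    -(2 * x 3 * fp - Real.exp (4 * t) * l * dV1),
    Real.exp (4 * t) * fp * dV1,
    Real.exp (4 * t) * fp * dV2]

/-- The time-dependent reduced Hamiltonian `H_t = p₁² + p₂² + e^{4t}·V(q₁,q₂)`. -/
noncomputable def Ht (V : (Fin 2 → ℝ) → ℝ) (t : ℝ) (x : Fin 4 → ℝ) : ℝ :=
  (x 2) ^ 2 + (x 3) ^ 2 + Real.exp (4 * t) * V ![x 0, x 1]

theorem ContinuousLinearMap.apply_vecCons_two {R M : Type*} [CommSemiring R] [TopologicalSpace R]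
    [AddCommMonoid M] [Module R M] [TopologicalSpace M] (φ : (Fin 2 → R) →L[R] M) (a b : R) :
    φ ![a, b] = a • φ (Pi.single 0 1) + b • φ (Pi.single 1 1) := by
  have hab : (![a, b] : Fin 2 → R) = a • Pi.single 0 1 + b • Pi.single 1 1 := by
    ext j; fin_cases j <;> simp
  rw [hab, map_add, map_smul, map_smul]

theorem hasFDerivAt_vecCons_two_apply {𝕜 ι : Type*} [NontriviallyNormedField 𝕜] [Fintype ι]
    (i j : ι) (x : ι → 𝕜) :
    HasFDerivAt (fun y : ι → 𝕜 => ![y i, y j])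
      (ContinuousLinearMap.pi ![ContinuousLinearMap.proj (R := 𝕜) i, ContinuousLinearMap.proj j])
      x := by
  rw [hasFDerivAt_pi']
  intro k
  fin_cases k
  · simpa using hasFDerivAt_apply i x
  · simpa using hasFDerivAt_apply j x

theorem fderiv_Ht_apply {V : (Fin 2 → ℝ) → ℝ} (t : ℝ) {x : Fin 4 → ℝ}
    (hV : DifferentiableAt ℝ V ![x 0, x 1]) (w : Fin 4 → ℝ) :
    fderiv ℝ (Ht V t) x w = 2 * x 2 * w 2 + 2 * x 3 * w 3 +
      Real.exp (4 * t) * (w 0 * fderiv ℝ V ![x 0, x 1] (Pi.single 0 1) +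
        w 1 * fderiv ℝ V ![x 0, x 1] (Pi.single 1 1)) := by
  have hH : HasFDerivAt (Ht V t) _ x :=
    (((hasFDerivAt_apply 2 x).pow 2).add ((hasFDerivAt_apply 3 x).pow 2)).add
      ((hV.hasFDerivAt.comp x (hasFDerivAt_vecCons_two_apply 0 1 x)).const_mul (Real.exp (4 * t)))
  have hq : ContinuousLinearMap.pi
      ![ContinuousLinearMap.proj (R := ℝ) 0, ContinuousLinearMap.proj 1] w = ![w 0, w 1] := by
    ext k; fin_cases k <;> rfl
  rw [hH.fderiv]
  simp only [_root_.add_apply, _root_.smul_apply, ContinuousLinearMap.comp_apply,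
    ContinuousLinearMap.proj_apply, hq, ContinuousLinearMap.apply_vecCons_two, smul_eq_mul]
  ring

theorem Xt_dotProduct_OmegaN_mulVec (f V : (Fin 2 → ℝ) → ℝ) (t : ℝ) (x w : Fin 4 → ℝ)
    (hfx : f ![x 2, x 3] ≠ 0) :
    Xt f V t x ⬝ᵥ OmegaN f x *ᵥ w = 2 * x 2 * w 2 + 2 * x 3 * w 3 +
      Real.exp (4 * t) * (w 0 * fderiv ℝ V ![x 0, x 1] (Pi.single 0 1) +
        w 1 * fderiv ℝ V ![x 0, x 1] (Pi.single 1 1)) := by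
  simp only [dotProduct, mulVec, Fin.sum_univ_four, Xt, OmegaN, Matrix.smul_apply, of_apply,
    cons_val', cons_val_fin_one, cons_val_zero, cons_val_one, cons_val, smul_eq_mul]
  field_simp
  ring

theorem stmt_19_general (f : (Fin 2 → ℝ) → ℝ) (hf0 : ∀ p, f p ≠ 0)
    (V : (Fin 2 → ℝ) → ℝ) (hV : Differentiable ℝ V) (t : ℝ) :
    ∀ x w : Fin 4 → ℝ,
      Xt f V t x ⬝ᵥ (OmegaN f x).mulVec w = fderiv ℝ (Ht V t) x w := fun x w => by
  rw [Xt_dotProduct_OmegaN_mulVec f V t x w (hf0 _), fderiv_Ht_apply t (hV _)]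

/-- The interior product `X_t ⌟ ω|_N` equals the exact 1-form `dH_t`:
`X_t(x)ᵀ·Ω_N(x)·w = DH_t(x)(w)`, so each `X_t` is the Hamiltonian vector field of `H_t`
with respect to the reduced symplectic form; in particular the Lie derivative of `ω|_N`
along `X_t` vanishes. -/
theorem stmt_19 (f : (Fin 2 → ℝ) → ℝ) (hf : Differentiable ℝ f) (hf0 : ∀ p, f p ≠ 0)
    (V : (Fin 2 → ℝ) → ℝ) (hV : Differentiable ℝ V) (t : ℝ) :
    ∀ x w : Fin 4 → ℝ,
      Xt f V t x ⬝ᵥ (OmegaN f x).mulVec w = fderiv ℝ (Ht V t) x w :=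
  stmt_19_general f hf0 V hV t
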